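/- Fix 0 < H < 1/2 and 0 ≤ θ ≤ H. For t > 0, h ∈ ℝ and x, y ∈ ℝ define d²(x,y;t,h) = ∫_0^∞ (1 - e^{-2tξ²})(1 - cos(|x-y|ξ))(1 - cos(hξ)) ξ^{-1-2H} dξ. Then there is a constant C depending only on H and θ such that d²(x,y;t,h) ≤ C |h|^{2θ} min( t^{H-θ}, |x-y|^{2H-2θ} ). -/

import Mathlib

/-
Bound the three factors of the integrand by `1 - e^{-w} ≤ min 1 w`, `1 - cos z ≤ 2 min 1 z²` and
`1 - cos z ≤ 2 |z|^{2θ}`. Spending the `h`-factor on `|h|^{2θ}` leaves the kernel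
`min 1 (b ξ²) ξ^{-1-2s}` with `s = H - θ` and `b = 2t` or `b = |x - y|²`, whose integral over
`(0, ∞)` is `b^s (1/(2-2s) + 1/(2s))`; this gives both branches of the minimum. For `θ = H` that
kernel is not integrable at infinity, and the `h`-factor itself is used as the kernel instead, with
`s = H` and `b = h²`.
-/

open MeasureTheory Real Set
open scoped ENNReal

lemma one_sub_cos_nonneg (z : ℝ) : 0 ≤ 1 - cos z := sub_nonneg.2 (cos_le_one z)

lemma one_sub_cos_le_two (z : ℝ) : 1 - cos z ≤ 2 := by linarith [neg_one_le_cos z]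

lemma one_sub_exp_neg_le_one (w : ℝ) : 1 - exp (-w) ≤ 1 := by linarith [exp_nonneg (-w)]

lemma one_sub_exp_neg_le_min (w : ℝ) : 1 - exp (-w) ≤ min 1 w :=
  le_min (one_sub_exp_neg_le_one w) (by linarith [add_one_le_exp (-w)])

lemma one_sub_cos_le_two_mul_min (z : ℝ) : 1 - cos z ≤ 2 * min 1 (z ^ 2) := by
  rw [mul_min_of_nonneg _ _ zero_le_two, mul_one]
  exact le_min (one_sub_cos_le_two z)
    (by linarith [one_sub_sq_div_two_le_cos (x := z), sq_nonneg z])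

lemma min_one_le_rpow {u θ : ℝ} (hu : 0 ≤ u) (hθ0 : 0 ≤ θ) (hθ1 : θ ≤ 1) : min 1 u ≤ u ^ θ := by
  rcases le_total u 1 with hu1 | hu1
  · calc min 1 u ≤ u ^ (1 : ℝ) := (min_le_right _ _).trans_eq (rpow_one u).symm
      _ ≤ u ^ θ := rpow_le_rpow_of_exponent_ge' hu hu1 hθ0 hθ1
  · exact (min_le_left _ _).trans (one_le_rpow hu1 hθ0)

lemma sq_rpow_eq_abs_rpow (u s : ℝ) : (u ^ 2) ^ s = |u| ^ (2 * s) := by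
  rw [← sq_abs, ← rpow_natCast, ← rpow_mul (abs_nonneg u)]
  norm_num

lemma one_sub_cos_le_two_mul_abs_rpow {θ : ℝ} (hθ0 : 0 ≤ θ) (hθ1 : θ ≤ 1) (z : ℝ) :
    1 - cos z ≤ 2 * |z| ^ (2 * θ) :=
  calc 1 - cos z ≤ 2 * min 1 (z ^ 2) := one_sub_cos_le_two_mul_min z
    _ ≤ 2 * (z ^ 2) ^ θ := by gcongr; exact min_one_le_rpow (sq_nonneg z) hθ0 hθ1
    _ = 2 * |z| ^ (2 * θ) := by rw [sq_rpow_eq_abs_rpow]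

lemma lintegral_Ioc_rpow {r c : ℝ} (hr : -1 < r) (hc : 0 < c) :
    ∫⁻ ξ in Ioc 0 c, ENNReal.ofReal (ξ ^ r) = ENNReal.ofReal (c ^ (r + 1) / (r + 1)) := by
  have hint : IntegrableOn (fun ξ : ℝ => ξ ^ r) (Ioc 0 c) :=
    (intervalIntegrable_iff_integrableOn_Ioc_of_le hc.le).mp
      (intervalIntegral.intervalIntegrable_rpow' hr)
  have hnonneg : 0 ≤ᵐ[volume.restrict (Ioc 0 c)] fun ξ : ℝ => ξ ^ r :=
    (ae_restrict_mem measurableSet_Ioc).mono fun ξ hξ => rpow_nonneg hξ.1.le r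
  rw [← ofReal_integral_eq_lintegral_ofReal hint hnonneg, ← intervalIntegral.integral_of_le hc.le,
    integral_rpow (Or.inl hr), zero_rpow (by linarith), sub_zero]

lemma lintegral_Ioi_rpow {r c : ℝ} (hr : r < -1) (hc : 0 < c) :
    ∫⁻ ξ in Ioi c, ENNReal.ofReal (ξ ^ r) = ENNReal.ofReal (-c ^ (r + 1) / (r + 1)) := by
  have hnonneg : 0 ≤ᵐ[volume.restrict (Ioi c)] fun ξ : ℝ => ξ ^ r :=
    (ae_restrict_mem measurableSet_Ioi).mono fun ξ hξ => rpow_nonneg (hc.trans hξ).le r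
  rw [← ofReal_integral_eq_lintegral_ofReal (integrableOn_Ioi_rpow_of_lt hr hc) hnonneg,
    integral_Ioi_rpow_of_lt hr hc]

lemma lintegral_min_one_mul_rpow_le {s b : ℝ} (hs0 : 0 < s) (hs1 : s < 1) (hb : 0 ≤ b) :
    ∫⁻ ξ in Ioi 0, ENNReal.ofReal (min 1 (b * ξ ^ 2) * ξ ^ (-1 - 2 * s))
      ≤ ENNReal.ofReal (b ^ s * (1 / (2 - 2 * s) + 1 / (2 * s))) := by
  rcases hb.eq_or_lt with rfl | hb
  · simp
  -- split at the point `c` where `b ξ²` crosses `1`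
  set c := b ^ (-1 / 2 : ℝ)
  have hc : 0 < c := rpow_pos_of_pos hb _
  have c_rpow (r : ℝ) : c ^ r = b ^ (-r / 2) := by rw [← rpow_mul hb.le]; ring_nf
  have head : ∫⁻ ξ in Ioc 0 c, ENNReal.ofReal (min 1 (b * ξ ^ 2) * ξ ^ (-1 - 2 * s))
      ≤ ENNReal.ofReal b * ENNReal.ofReal (c ^ (1 - 2 * s + 1) / (1 - 2 * s + 1)) := by
    rw [← lintegral_Ioc_rpow (by linarith) hc, ← lintegral_const_mul' _ _ ENNReal.ofReal_ne_top]
    refine setLIntegral_mono' measurableSet_Ioc fun ξ hξ => ?_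
    rw [← ENNReal.ofReal_mul hb.le]
    refine ENNReal.ofReal_le_ofReal ?_
    calc min 1 (b * ξ ^ 2) * ξ ^ (-1 - 2 * s) ≤ b * (ξ ^ (2 : ℝ) * ξ ^ (-1 - 2 * s)) := by
          rw [rpow_two, ← mul_assoc]
          exact mul_le_mul_of_nonneg_right (min_le_right _ _) (rpow_nonneg hξ.1.le _)
      _ = b * ξ ^ (1 - 2 * s) := by rw [← rpow_add hξ.1]; ring_nf
  have tail : ∫⁻ ξ in Ioi c, ENNReal.ofReal (min 1 (b * ξ ^ 2) * ξ ^ (-1 - 2 * s))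
      ≤ ENNReal.ofReal (-c ^ (-1 - 2 * s + 1) / (-1 - 2 * s + 1)) := by
    rw [← lintegral_Ioi_rpow (by linarith) hc]
    refine setLIntegral_mono' measurableSet_Ioi fun ξ hξ => ENNReal.ofReal_le_ofReal ?_
    exact mul_le_of_le_one_left (rpow_nonneg (hc.trans hξ).le _) (min_le_left _ _)
  calc ∫⁻ ξ in Ioi 0, ENNReal.ofReal (min 1 (b * ξ ^ 2) * ξ ^ (-1 - 2 * s))
      = (∫⁻ ξ in Ioc 0 c, ENNReal.ofReal (min 1 (b * ξ ^ 2) * ξ ^ (-1 - 2 * s)))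
        + ∫⁻ ξ in Ioi c, ENNReal.ofReal (min 1 (b * ξ ^ 2) * ξ ^ (-1 - 2 * s)) := by
        rw [← lintegral_union measurableSet_Ioi (Ioc_disjoint_Ioi le_rfl),
          Ioc_union_Ioi_eq_Ioi hc.le]
    _ ≤ _ := add_le_add head tail
    _ = ENNReal.ofReal (b ^ s * (1 / (2 - 2 * s) + 1 / (2 * s))) := by
        have head_eq : b * (c ^ (1 - 2 * s + 1) / (1 - 2 * s + 1)) = b ^ s / (2 - 2 * s) := by
          rw [c_rpow, show -(1 - 2 * s + 1) / 2 = s - 1 by ring, rpow_sub_one hb.ne',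
            show 1 - 2 * s + 1 = 2 - 2 * s by ring]
          field_simp
        have tail_eq : -c ^ (-1 - 2 * s + 1) / (-1 - 2 * s + 1) = b ^ s / (2 * s) := by
          rw [c_rpow, show -(-1 - 2 * s + 1) / 2 = s by ring, show -1 - 2 * s + 1 = -(2 * s) by ring,
            neg_div_neg_eq]
        have hs2 : 0 < 2 - 2 * s := by linarith
        rw [← ENNReal.ofReal_mul hb.le, head_eq, tail_eq,
          ← ENNReal.ofReal_add (by positivity) (by positivity)]
        ring_nf

lemma lintegral_Ioi_le_of_le_kernel {f : ℝ → ℝ} {a b s : ℝ} (ha : 0 ≤ a) (hb : 0 ≤ b)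
    (hs0 : 0 < s) (hs1 : s < 1) (hf : ∀ ξ > 0, f ξ ≤ a * (min 1 (b * ξ ^ 2) * ξ ^ (-1 - 2 * s))) :
    ∫⁻ ξ in Ioi 0, ENNReal.ofReal (f ξ)
      ≤ ENNReal.ofReal (a * (b ^ s * (1 / (2 - 2 * s) + 1 / (2 * s)))) :=
  calc ∫⁻ ξ in Ioi 0, ENNReal.ofReal (f ξ)
      ≤ ∫⁻ ξ in Ioi 0, ENNReal.ofReal a * ENNReal.ofReal (min 1 (b * ξ ^ 2) * ξ ^ (-1 - 2 * s)) :=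
        setLIntegral_mono' measurableSet_Ioi fun ξ hξ =>
          (ENNReal.ofReal_le_ofReal (hf ξ hξ)).trans_eq (ENNReal.ofReal_mul ha)
    _ = ENNReal.ofReal a
          * ∫⁻ ξ in Ioi 0, ENNReal.ofReal (min 1 (b * ξ ^ 2) * ξ ^ (-1 - 2 * s)) :=
        lintegral_const_mul' _ _ ENNReal.ofReal_ne_top
    _ ≤ ENNReal.ofReal a * ENNReal.ofReal (b ^ s * (1 / (2 - 2 * s) + 1 / (2 * s))) := by
        gcongr
        exact lintegral_min_one_mul_rpow_le hs0 hs1 hb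
    _ = _ := (ENNReal.ofReal_mul ha).symm

/-- The integrand of `d²(x,y;t,h)`, with `r` standing for `|x - y|`. -/
noncomputable def incrementIntegrand (H t r h ξ : ℝ) : ℝ :=
  (1 - exp (-(2 * t * ξ ^ 2))) * (1 - cos (r * ξ)) * (1 - cos (h * ξ)) * ξ ^ (-1 - 2 * H)

section incrementIntegrand

variable {H θ t r h ξ : ℝ}

lemma abs_mul_rpow_mul_rpow (hξ : 0 < ξ) :
    |h * ξ| ^ (2 * θ) * ξ ^ (-1 - 2 * H) = |h| ^ (2 * θ) * ξ ^ (-1 - 2 * (H - θ)) := by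
  rw [abs_mul, mul_rpow (abs_nonneg h) (abs_nonneg ξ), abs_of_pos hξ, mul_assoc, ← rpow_add hξ]
  ring_nf

lemma incrementIntegrand_le_time (ht : 0 ≤ t) (hθ0 : 0 ≤ θ) (hθ1 : θ ≤ 1) (hξ : 0 < ξ) :
    incrementIntegrand H t r h ξ
      ≤ 4 * |h| ^ (2 * θ) * (min 1 (2 * t * ξ ^ 2) * ξ ^ (-1 - 2 * (H - θ))) := by
  have hA := one_sub_exp_neg_le_min (2 * t * ξ ^ 2)
  have hB := one_sub_cos_le_two (r * ξ)
  have hC := one_sub_cos_le_two_mul_abs_rpow hθ0 hθ1 (h * ξ)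
  have hB0 := one_sub_cos_nonneg (r * ξ)
  have hC0 := one_sub_cos_nonneg (h * ξ)
  calc incrementIntegrand H t r h ξ
      ≤ min 1 (2 * t * ξ ^ 2) * 2 * (2 * |h * ξ| ^ (2 * θ)) * ξ ^ (-1 - 2 * H) := by
        unfold incrementIntegrand
        gcongr
    _ = 4 * min 1 (2 * t * ξ ^ 2) * (|h * ξ| ^ (2 * θ) * ξ ^ (-1 - 2 * H)) := by ring
    _ = _ := by rw [abs_mul_rpow_mul_rpow hξ]; ring

lemma incrementIntegrand_le_space (hθ0 : 0 ≤ θ) (hθ1 : θ ≤ 1) (hξ : 0 < ξ) :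
    incrementIntegrand H t r h ξ
      ≤ 4 * |h| ^ (2 * θ) * (min 1 (r ^ 2 * ξ ^ 2) * ξ ^ (-1 - 2 * (H - θ))) := by
  have hA := one_sub_exp_neg_le_one (2 * t * ξ ^ 2)
  have hB := one_sub_cos_le_two_mul_min (r * ξ)
  have hC := one_sub_cos_le_two_mul_abs_rpow hθ0 hθ1 (h * ξ)
  have hB0 := one_sub_cos_nonneg (r * ξ)
  have hC0 := one_sub_cos_nonneg (h * ξ)
  calc incrementIntegrand H t r h ξ
      ≤ 1 * (2 * min 1 ((r * ξ) ^ 2)) * (2 * |h * ξ| ^ (2 * θ)) * ξ ^ (-1 - 2 * H) := by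
        unfold incrementIntegrand
        gcongr
    _ = 4 * min 1 (r ^ 2 * ξ ^ 2) * (|h * ξ| ^ (2 * θ) * ξ ^ (-1 - 2 * H)) := by
        rw [mul_pow]; ring
    _ = _ := by rw [abs_mul_rpow_mul_rpow hξ]; ring

lemma incrementIntegrand_le_increment (hξ : 0 < ξ) :
    incrementIntegrand H t r h ξ ≤ 4 * (min 1 (h ^ 2 * ξ ^ 2) * ξ ^ (-1 - 2 * H)) := by
  have hA := one_sub_exp_neg_le_one (2 * t * ξ ^ 2)
  have hB := one_sub_cos_le_two (r * ξ)
  have hC := one_sub_cos_le_two_mul_min (h * ξ)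
  have hB0 := one_sub_cos_nonneg (r * ξ)
  have hC0 := one_sub_cos_nonneg (h * ξ)
  calc incrementIntegrand H t r h ξ
      ≤ 1 * 2 * (2 * min 1 ((h * ξ) ^ 2)) * ξ ^ (-1 - 2 * H) := by
        unfold incrementIntegrand
        gcongr
    _ = _ := by rw [mul_pow]; ring

lemma lintegral_incrementIntegrand_le_time (ht : 0 ≤ t) (hθ0 : 0 ≤ θ) (hθH : θ < H)
    (hH1 : H < 1) :
    ∫⁻ ξ in Ioi 0, ENNReal.ofReal (incrementIntegrand H t r h ξ)
      ≤ ENNReal.ofReal (4 * 2 ^ (H - θ) * (1 / (2 - 2 * (H - θ)) + 1 / (2 * (H - θ)))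
          * |h| ^ (2 * θ) * t ^ (H - θ)) := by
  refine (lintegral_Ioi_le_of_le_kernel (by positivity) (by positivity) (sub_pos.2 hθH)
    (by linarith) fun ξ hξ => incrementIntegrand_le_time ht hθ0 (by linarith) hξ).trans_eq ?_
  rw [mul_rpow zero_le_two ht]
  ring_nf

lemma lintegral_incrementIntegrand_le_space (hθ0 : 0 ≤ θ) (hθH : θ < H) (hH1 : H < 1) :
    ∫⁻ ξ in Ioi 0, ENNReal.ofReal (incrementIntegrand H t r h ξ)
      ≤ ENNReal.ofReal (4 * (1 / (2 - 2 * (H - θ)) + 1 / (2 * (H - θ)))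
          * |h| ^ (2 * θ) * |r| ^ (2 * H - 2 * θ)) := by
  refine (lintegral_Ioi_le_of_le_kernel (by positivity) (by positivity) (sub_pos.2 hθH)
    (by linarith) fun ξ hξ => incrementIntegrand_le_space hθ0 (by linarith) hξ).trans_eq ?_
  rw [sq_rpow_eq_abs_rpow, mul_sub]
  ring_nf

lemma lintegral_incrementIntegrand_le_increment (hH0 : 0 < H) (hH1 : H < 1) :
    ∫⁻ ξ in Ioi 0, ENNReal.ofReal (incrementIntegrand H t r h ξ)
      ≤ ENNReal.ofReal (4 * (1 / (2 - 2 * H) + 1 / (2 * H)) * |h| ^ (2 * H)) := by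
  refine (lintegral_Ioi_le_of_le_kernel (by positivity) (sq_nonneg h) hH0 hH1
    fun ξ hξ => incrementIntegrand_le_increment hξ).trans_eq ?_
  rw [sq_rpow_eq_abs_rpow]
  ring_nf

end incrementIntegrand

/-- For `H ∈ (0,1/2)` and `θ ∈ [0,H]`, the squared natural metric
`d²(x,y;t,h) = ∫_0^∞ (1-e^{-2tξ²})(1-cos(|x-y|ξ))(1-cos(hξ)) ξ^{-1-2H} dξ`
satisfies `d² ≤ C |h|^{2θ} min(t^{H-θ}, |x-y|^{2H-2θ})`. -/
theorem stmt16 (H θ : ℝ) (hH : H ∈ Set.Ioo (0 : ℝ) (1 / 2)) (hθ : θ ∈ Set.Icc (0 : ℝ) H) :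
    ∃ C : ℝ, 0 < C ∧ ∀ t h x y : ℝ, 0 < t →
      (∫⁻ ξ in Set.Ioi (0 : ℝ), ENNReal.ofReal
          ((1 - Real.exp (-(2 * t * ξ ^ 2))) * (1 - Real.cos (|x - y| * ξ))
            * (1 - Real.cos (h * ξ)) * ξ ^ (-1 - 2 * H)))
        ≤ ENNReal.ofReal
            (C * |h| ^ (2 * θ) * min (t ^ (H - θ)) (|x - y| ^ (2 * H - 2 * θ))) := by
  obtain ⟨hH0, hH1⟩ := hH
  obtain ⟨hθ0, hθH⟩ := hθ
  have kernel_pos {s : ℝ} (hs0 : 0 < s) (hs1 : s < 1) : 0 < 1 / (2 - 2 * s) + 1 / (2 * s) := by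
    have : 0 < 2 - 2 * s := by linarith
    positivity
  rcases hθH.eq_or_lt with rfl | hθH
  · refine ⟨4 * (1 / (2 - 2 * θ) + 1 / (2 * θ)), mul_pos four_pos (kernel_pos hH0 (by linarith)),
      fun t h x y _ => ?_⟩
    show ∫⁻ ξ in Ioi 0, ENNReal.ofReal (incrementIntegrand θ t |x - y| h ξ) ≤ _
    simpa only [sub_self, mul_zero, rpow_zero, min_self, mul_one]
      using lintegral_incrementIntegrand_le_increment hH0 (by linarith)
  · set K := 1 / (2 - 2 * (H - θ)) + 1 / (2 * (H - θ))
    have hK : 0 < K := kernel_pos (sub_pos.2 hθH) (by linarith)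
    refine ⟨4 * 2 ^ (H - θ) * K, by positivity, fun t h x y ht => ?_⟩
    show ∫⁻ ξ in Ioi 0, ENNReal.ofReal (incrementIntegrand H t |x - y| h ξ) ≤ _
    have time := lintegral_incrementIntegrand_le_time (r := |x - y|) (h := h) ht.le hθ0 hθH
      (by linarith)
    have space := lintegral_incrementIntegrand_le_space (t := t) (r := |x - y|) (h := h) hθ0 hθH
      (by linarith)
    rw [abs_abs] at space
    rw [mul_min_of_nonneg _ _ (by positivity), ENNReal.ofReal_min]
    refine le_min time (space.trans (ENNReal.ofReal_le_ofReal ?_))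
    have : (1 : ℝ) ≤ 2 ^ (H - θ) := one_le_rpow one_le_two (sub_pos.2 hθH).le
    gcongr
    exact le_mul_of_one_le_right zero_le_four this
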